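/- arXiv:2005.06084 — 4 statements merged into one kernel-verified Lean document; each statement's English description precedes it below -/
import Mathlib

section
/- Let (u_n) be a sequence of functions from ℝ^m to ℝ^d such that for all n and all y, ‖D^j u_n(y)‖ ≤ 1 for j = 0,1,…,k, and each D^k u_n is Lipschitz with Lipschitz constant 1. Assume that for each y the sequence u_n(y) converges to u(y). Then u is C^k, its k-th derivative is Lipschitz with constant 1, ‖D^j u(y)‖ ≤ 1 for all y and j ≤ k, and D^j u_n(y) converges to D^j u(y) for all y and 1 ≤ j ≤ k. -/
open Filter Topology Function Metric

section Helpers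

variable {G E : Type*} [NormedAddCommGroup G] [NormedSpace ℝ G]
  [NormedAddCommGroup E] [NormedSpace ℝ E]

lemma taylor_sq {f : G → E} (hdiff : Differentiable ℝ f)
    (hlip : LipschitzWith 1 (fderiv ℝ f)) (y h : G) :
    ‖f (y + h) - f y - fderiv ℝ f y h‖ ≤ ‖h‖ * ‖h‖ := by
  have key := Convex.norm_image_sub_le_of_norm_hasFDerivWithin_le
    (f := fun x => f x - fderiv ℝ f y x)
    (f' := fun x => fderiv ℝ f x - fderiv ℝ f y)
    (s := Metric.closedBall y ‖h‖) (C := ‖h‖) (x := y) (y := y + h)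
    (fun x _ => ((hdiff x).hasFDerivAt.sub (fderiv ℝ f y).hasFDerivAt).hasFDerivWithinAt)
    (fun x hx => by
      calc ‖fderiv ℝ f x - fderiv ℝ f y‖ = dist (fderiv ℝ f x) (fderiv ℝ f y) :=
            (dist_eq_norm _ _).symm
        _ ≤ 1 * dist x y := hlip.dist_le_mul x y
        _ ≤ ‖h‖ := by rw [one_mul]; exact Metric.mem_closedBall.mp hx)
    (convex_closedBall y ‖h‖) (Metric.mem_closedBall_self (norm_nonneg h))
    (by simp [Metric.mem_closedBall, dist_self_add_left])
  have h1 : (f (y + h) - fderiv ℝ f y (y + h)) - (f y - fderiv ℝ f y y)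
      = f (y + h) - f y - fderiv ℝ f y h := by
    rw [map_add]; abel
  have h2 : y + h - y = h := by abel
  rw [h1, h2] at key
  exact key

lemma opnorm_le_sum_single {m : ℕ} (A : (Fin m → ℝ) →L[ℝ] E) :
    ‖A‖ ≤ ∑ i, ‖A (Pi.single i 1)‖ := by
  refine A.opNorm_le_bound (Finset.sum_nonneg fun i _ => norm_nonneg _) fun x => ?_
  have hx : x = ∑ i, x i • (Pi.single i 1 : Fin m → ℝ) := by
    conv_lhs => rw [pi_eq_sum_univ x]
    refine Finset.sum_congr rfl fun i _ => ?_
    congr 1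
    ext j
    simp [Pi.single_apply, eq_comm]
  calc ‖A x‖ = ‖∑ i, x i • A (Pi.single i 1)‖ := by
        conv_lhs => rw [hx]
        rw [map_sum]
        simp [map_smul]
    _ ≤ ∑ i, ‖x i • A (Pi.single i 1)‖ := norm_sum_le _ _
    _ ≤ ∑ i, ‖A (Pi.single i 1)‖ * ‖x‖ := by
        refine Finset.sum_le_sum fun i _ => ?_
        rw [norm_smul, mul_comm]
        exact mul_le_mul_of_nonneg_left (norm_le_pi_norm x i) (norm_nonneg _)
    _ = (∑ i, ‖A (Pi.single i 1)‖) * ‖x‖ := by rw [Finset.sum_mul]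

lemma keyStep {m : ℕ} {E : Type*} [NormedAddCommGroup E] [NormedSpace ℝ E] [CompleteSpace E]
    (v : ℕ → (Fin m → ℝ) → E) (vlim : (Fin m → ℝ) → E)
    (hdiff : ∀ n, Differentiable ℝ (v n))
    (hlip : ∀ n, LipschitzWith 1 (fderiv ℝ (v n)))
    (hconv : ∀ y, Tendsto (fun n => v n y) atTop (𝓝 (vlim y))) :
    ∃ w : (Fin m → ℝ) → ((Fin m → ℝ) →L[ℝ] E),
      (∀ y, Tendsto (fun n => fderiv ℝ (v n) y) atTop (𝓝 (w y))) ∧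
      (∀ y, HasFDerivAt vlim (w y) y) := by
  have hcauchy : ∀ z, CauchySeq (fun n => v n z) := fun z => (hconv z).cauchySeq
  have main : ∀ y, CauchySeq (fun n => fderiv ℝ (v n) y) := by
    intro y
    rw [Metric.cauchySeq_iff]
    intro ε hε
    set t : ℝ := ε / (4 * (m + 1)) with ht
    have htpos : 0 < t := by positivity
    have hN : ∀ z : Fin m → ℝ, ∃ N, ∀ a ≥ N, ∀ b ≥ N, dist (v a z) (v b z) < t * t :=
      fun z => Metric.cauchySeq_iff.mp (hcauchy z) (t * t) (by positivity)
    choose N hNspec using hN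
    set hh : Fin m → (Fin m → ℝ) := fun i => t • (Pi.single i 1 : Fin m → ℝ) with hhh
    set M := max (N y) (Finset.univ.sup fun i => N (y + hh i)) with hM
    refine ⟨M, fun a ha b hb => ?_⟩
    set A := fderiv ℝ (v a) y - fderiv ℝ (v b) y with hA
    have key : ∀ i : Fin m, ‖A (Pi.single i 1)‖ ≤ 4 * t := by
      intro i
      have hnorm : ‖hh i‖ = t := by
        rw [hhh]
        simp only [norm_smul, Pi.norm_single, norm_one, mul_one]
        exact abs_of_pos htpos
      have Ta := taylor_sq (hdiff a) (hlip a) y (hh i)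
      have Tb := taylor_sq (hdiff b) (hlip b) y (hh i)
      rw [hnorm] at Ta Tb
      have hMi : N (y + hh i) ≤ M :=
        le_trans (Finset.le_sup (f := fun i => N (y + hh i)) (Finset.mem_univ i)) (le_max_right _ _)
      have hza : dist (v a (y + hh i)) (v b (y + hh i)) < t * t :=
        hNspec (y + hh i) a (le_trans hMi ha) b (le_trans hMi hb)
      have hzy : dist (v a y) (v b y) < t * t :=
        hNspec y a (le_trans (le_max_left _ _) ha) b (le_trans (le_max_left _ _) hb)
      rw [dist_eq_norm] at hza hzy
      have iden : A (hh i) =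
          -(v a (y + hh i) - v a y - fderiv ℝ (v a) y (hh i))
          + (v b (y + hh i) - v b y - fderiv ℝ (v b) y (hh i))
          + ((v a (y + hh i) - v b (y + hh i)) - (v a y - v b y)) := by
        rw [hA]
        simp only [ContinuousLinearMap.sub_apply]
        abel
      have step1 : ‖A (hh i)‖ ≤ t * t + t * t + (t * t + t * t) := by
        rw [iden]
        refine le_trans (norm_add_le _ _) (add_le_add (le_trans (norm_add_le _ _)
          (add_le_add (by rwa [norm_neg]) Tb)) ?_)
        exact le_trans (norm_sub_le _ _) (add_le_add hza.le hzy.le)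
      have happ : ‖A (hh i)‖ = t * ‖A (Pi.single i 1)‖ := by
        rw [hhh]
        simp only [map_smul, norm_smul]
        rw [Real.norm_of_nonneg htpos.le]
      rw [happ] at step1
      have : t * ‖A (Pi.single i 1)‖ ≤ t * (4 * t) := by linarith
      exact (mul_le_mul_iff_right₀ htpos).mp this
    rw [dist_eq_norm, ← hA]
    have b1 : ‖A‖ ≤ ∑ i : Fin m, ‖A (Pi.single i 1)‖ := opnorm_le_sum_single A
    have b2 : (∑ i : Fin m, ‖A (Pi.single i 1)‖) ≤ (m : ℝ) * (4 * t) := by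
      calc (∑ i : Fin m, ‖A (Pi.single i 1)‖) ≤ ∑ _i : Fin m, 4 * t :=
            Finset.sum_le_sum fun i _ => key i
        _ = (m : ℝ) * (4 * t) := by simp [Finset.sum_const, mul_comm]
    have b3 : (m : ℝ) * (4 * t) < ε := by
      rw [ht]
      have hm1 : (0 : ℝ) < 4 * (m + 1) := by positivity
      calc (m : ℝ) * (4 * (ε / (4 * (m + 1)))) = ε * (4 * m) / (4 * (m + 1)) := by ring
        _ < ε := by
            rw [div_lt_iff₀ hm1]
            nlinarith
    linarith
  have hex : ∀ y, ∃ L, Tendsto (fun n => fderiv ℝ (v n) y) atTop (𝓝 L) :=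
    fun y => cauchySeq_tendsto_of_complete (main y)
  choose w hw using hex
  refine ⟨w, hw, fun y => ?_⟩
  have quad : ∀ h : Fin m → ℝ, ‖vlim (y + h) - vlim y - w y h‖ ≤ ‖h‖ * ‖h‖ := by
    intro h
    have T : Tendsto (fun n => v n (y + h) - v n y - fderiv ℝ (v n) y h) atTop
        (𝓝 (vlim (y + h) - vlim y - w y h)) := by
      refine ((hconv (y + h)).sub (hconv y)).sub ?_
      exact ((ContinuousLinearMap.apply ℝ E h).continuous.tendsto (w y)).comp (hw y)
    exact le_of_tendsto T.norm
      (Eventually.of_forall fun n => taylor_sq (hdiff n) (hlip n) y h)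
  rw [hasFDerivAt_iff_isLittleO_nhds_zero, Asymptotics.isLittleO_iff]
  intro c hc
  filter_upwards [Metric.ball_mem_nhds (0 : Fin m → ℝ) hc] with h hmem
  rw [mem_ball_zero_iff] at hmem
  calc ‖vlim (y + h) - vlim y - w y h‖ ≤ ‖h‖ * ‖h‖ := quad h
    _ ≤ c * ‖h‖ := mul_le_mul_of_nonneg_right hmem.le (norm_nonneg h)

end Helpers

theorem lanford_aux (m : ℕ) : ∀ (k : ℕ) (E : Type) [NormedAddCommGroup E] [NormedSpace ℝ E]
    [CompleteSpace E] (u : ℕ → (Fin m → ℝ) → E) (ulim : (Fin m → ℝ) → E),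
    (∀ n, ContDiff ℝ k (u n)) →
    (∀ n y, ∀ j ≤ k, ‖iteratedFDeriv ℝ j (u n) y‖ ≤ 1) →
    (∀ n, LipschitzWith 1 (iteratedFDeriv ℝ k (u n))) →
    (∀ y, Tendsto (fun n => u n y) atTop (𝓝 (ulim y))) →
    ContDiff ℝ k ulim ∧
    LipschitzWith 1 (iteratedFDeriv ℝ k ulim) ∧
    (∀ y, ∀ j ≤ k, ‖iteratedFDeriv ℝ j ulim y‖ ≤ 1) ∧
    (∀ y, ∀ j, 1 ≤ j → j ≤ k →
      Tendsto (fun n => iteratedFDeriv ℝ j (u n) y) atTop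
        (𝓝 (iteratedFDeriv ℝ j ulim y))) := by
  intro k
  induction k with
  | zero =>
    intro E _ _ _ u ulim hsmooth hbd hlip hconv
    have hulipn : ∀ n, LipschitzWith 1 (u n) := by
      intro n
      have he : u n = (continuousMultilinearCurryFin0 ℝ (Fin m → ℝ) E)
          ∘ iteratedFDeriv ℝ 0 (u n) := by
        rw [iteratedFDeriv_zero_eq_comp]
        ext y
        simp
      rw [he]
      simpa using
        ((continuousMultilinearCurryFin0 ℝ (Fin m → ℝ) E).isometry.lipschitz.comp (hlip n))
    have hulip : LipschitzWith 1 ulim := by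
      apply LipschitzWith.of_dist_le_mul
      intro x y
      exact le_of_tendsto ((hconv x).dist (hconv y))
        (Eventually.of_forall fun n => (hulipn n).dist_le_mul x y)
    refine ⟨?_, ?_, ?_, ?_⟩
    · exact_mod_cast contDiff_zero.mpr hulip.continuous
    · rw [iteratedFDeriv_zero_eq_comp]
      simpa using
        ((continuousMultilinearCurryFin0 ℝ (Fin m → ℝ) E).symm.isometry.lipschitz.comp hulip)
    · intro y j hj
      obtain rfl := Nat.le_zero.mp hj
      rw [norm_iteratedFDeriv_zero]
      exact le_of_tendsto (hconv y).norm
        (Eventually.of_forall fun n => by simpa using hbd n y 0 le_rfl)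
    · intro y j h1 h0; omega
  | succ k IH =>
    intro E _ _ _ u ulim hsmooth hbd hlip hconv
    have hsm : ∀ n, ContDiff ℝ ((k : WithTop ℕ∞) + 1) (u n) := fun n => by
      exact_mod_cast hsmooth n
    have hdiff : ∀ n, Differentiable ℝ (u n) := fun n => (hsm n).differentiable (by simp)
    have hsm' : ∀ n, ContDiff ℝ (k : WithTop ℕ∞) (fderiv ℝ (u n)) := fun n =>
      (contDiff_succ_iff_fderiv.mp (hsm n)).2.2
    have hlipk : ∀ n, LipschitzWith 1 (iteratedFDeriv ℝ k (fderiv ℝ (u n))) := by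
      intro n
      have hfe : iteratedFDeriv ℝ k (fderiv ℝ (u n)) =
          (continuousMultilinearCurryRightEquiv' ℝ k (Fin m → ℝ) E)
            ∘ iteratedFDeriv ℝ (k + 1) (u n) := by
        funext x
        rw [comp_apply, iteratedFDeriv_succ_eq_comp_right, comp_apply]
        simp
      rw [hfe]
      simpa using ((continuousMultilinearCurryRightEquiv' ℝ k (Fin m → ℝ) E).isometry.lipschitz.comp (hlip n))
    have hbd' : ∀ n y, ∀ j ≤ k, ‖iteratedFDeriv ℝ j (fderiv ℝ (u n)) y‖ ≤ 1 := by
      intro n y j hj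
      calc ‖iteratedFDeriv ℝ j (fderiv ℝ (u n)) y‖
          = ‖iteratedFDeriv ℝ (j + 1) (u n) y‖ := norm_iteratedFDeriv_fderiv
        _ ≤ 1 := hbd n y (j + 1) (by omega)
    have lip1 : ∀ n, LipschitzWith 1 (iteratedFDeriv ℝ 1 (u n)) := by
      intro n
      rcases Nat.eq_zero_or_pos k with rfl | hk
      · exact hlip n
      · apply lipschitzWith_of_nnnorm_fderiv_le (𝕜 := ℝ)
        · exact ((hsmooth n).iteratedFDeriv_right (i := 1) (m := 1)
            (by norm_cast; omega)).differentiable one_ne_zero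
        · intro x
          rw [← NNReal.coe_le_coe]
          simp only [coe_nnnorm, NNReal.coe_one]
          rw [norm_fderiv_iteratedFDeriv]
          exact hbd n x 2 (by omega)
    have hlipf : ∀ n, LipschitzWith 1 (fderiv ℝ (u n)) := by
      intro n
      have hfe : fderiv ℝ (u n) = (continuousMultilinearCurryFin1 ℝ (Fin m → ℝ) E)
          ∘ iteratedFDeriv ℝ 1 (u n) := by
        funext x
        ext v
        simp [iteratedFDeriv_one_apply, Fin.snoc]
      rw [hfe]
      simpa using ((continuousMultilinearCurryFin1 ℝ (Fin m → ℝ) E).isometry.lipschitz.comp (lip1 n))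
    obtain ⟨w, hw, hwd⟩ := keyStep u ulim hdiff hlipf hconv
    have hfd : fderiv ℝ ulim = w := funext fun y => (hwd y).fderiv
    obtain ⟨C1, C2, C3, C4⟩ := IH ((Fin m → ℝ) →L[ℝ] E) (fun n => fderiv ℝ (u n)) w
      hsm' hbd' hlipk hw
    have hdul : Differentiable ℝ ulim := fun y => (hwd y).differentiableAt
    refine ⟨?_, ?_, ?_, ?_⟩
    · have : ContDiff ℝ ((k : WithTop ℕ∞) + 1) ulim := by
        rw [contDiff_succ_iff_fderiv]
        exact ⟨hdul, fun h => absurd h (by simp), hfd ▸ C1⟩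
      exact_mod_cast this
    · have he : iteratedFDeriv ℝ (k + 1) ulim =
          (continuousMultilinearCurryRightEquiv' ℝ k (Fin m → ℝ) E).symm
            ∘ iteratedFDeriv ℝ k w := by
        funext x
        rw [iteratedFDeriv_succ_eq_comp_right, comp_apply, comp_apply, hfd]
      rw [he]
      simpa using ((continuousMultilinearCurryRightEquiv' ℝ k (Fin m → ℝ) E).symm.isometry.lipschitz.comp C2)
    · intro y j hj
      match j with
      | 0 =>
        rw [norm_iteratedFDeriv_zero]
        exact le_of_tendsto (hconv y).norm
          (Eventually.of_forall fun n => by simpa using hbd n y 0 (by omega))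
      | (j' + 1) =>
        calc ‖iteratedFDeriv ℝ (j' + 1) ulim y‖
            = ‖iteratedFDeriv ℝ j' (fderiv ℝ ulim) y‖ := norm_iteratedFDeriv_fderiv.symm
          _ ≤ 1 := by rw [hfd]; exact C3 y j' (by omega)
    · intro y j h1 hk2
      obtain ⟨j', rfl⟩ : ∃ j', j = j' + 1 := ⟨j - 1, by omega⟩
      have base : Tendsto (fun n => iteratedFDeriv ℝ j' (fderiv ℝ (u n)) y) atTop
          (𝓝 (iteratedFDeriv ℝ j' w y)) := by
        rcases Nat.eq_zero_or_pos j' with rfl | hj'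
        · simp only [iteratedFDeriv_zero_eq_comp, comp_apply]
          exact ((continuousMultilinearCurryFin0 ℝ (Fin m → ℝ)
            ((Fin m → ℝ) →L[ℝ] E)).symm.continuous.tendsto _).comp (hw y)
        · exact C4 y j' hj' (by omega)
      simp only [iteratedFDeriv_succ_eq_comp_right, comp_apply, hfd]
      exact (((continuousMultilinearCurryRightEquiv' ℝ j' (Fin m → ℝ) E).symm.continuous.tendsto _).comp base)

/-- Lanford's lemma, finite-dimensional case. -/
theorem lanford_lemma (m d k : ℕ)
    (u : ℕ → (Fin m → ℝ) → (Fin d → ℝ)) (ulim : (Fin m → ℝ) → (Fin d → ℝ))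
    (hsmooth : ∀ n, ContDiff ℝ k (u n))
    (hbd : ∀ n y, ∀ j ≤ k, ‖iteratedFDeriv ℝ j (u n) y‖ ≤ 1)
    (hlip : ∀ n, LipschitzWith 1 (iteratedFDeriv ℝ k (u n)))
    (hconv : ∀ y, Tendsto (fun n => u n y) atTop (𝓝 (ulim y))) :
    ContDiff ℝ k ulim ∧
    LipschitzWith 1 (iteratedFDeriv ℝ k ulim) ∧
    (∀ y, ∀ j ≤ k, ‖iteratedFDeriv ℝ j ulim y‖ ≤ 1) ∧
    (∀ y, ∀ j, 1 ≤ j → j ≤ k →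
      Tendsto (fun n => iteratedFDeriv ℝ j (u n) y) atTop
        (𝓝 (iteratedFDeriv ℝ j ulim y))) :=
  lanford_aux m k (Fin d → ℝ) u ulim hsmooth hbd hlip hconv
end

section
/- Let B > 0 and k ∈ ℕ. The set of functions f : ℝ → ℝ that are C^k with ‖D^j f(x)‖ ≤ B for all x and 0 ≤ j ≤ k and with D^k f Lipschitz with constant B is closed under pointwise convergence: if f_n lie in this set and f_n(x) → f(x) for every x, then f also lies in this set. -/
open Filter Topology

/-- Taylor-type bound: if `deriv u` is `C`-Lipschitz then
`|u (x+h) - u x - h * deriv u x| ≤ C * h * h` for `h ≥ 0`. -/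
lemma taylor_bound_aux (u : ℝ → ℝ) (hu : Differentiable ℝ u) {C : NNReal}
    (hl : LipschitzWith C (deriv u)) (x h : ℝ) (hh : 0 ≤ h) :
    |u (x + h) - u x - h * deriv u x| ≤ C * h * h := by
  set c : ℝ := deriv u x with hc
  have hw : ∀ t ∈ Set.Icc x (x + h),
      HasDerivWithinAt (fun t => u t - t * c) (deriv u t - c) (Set.Icc x (x + h)) t := by
    intro t _
    have := ((hu t).hasDerivAt.sub ((hasDerivAt_id t).mul_const c)).hasDerivWithinAt
      (s := Set.Icc x (x + h))
    exact this.congr_deriv (by simp)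
  have hbound : ∀ t ∈ Set.Icc x (x + h), ‖deriv u t - c‖ ≤ C * h := by
    intro t ht
    have h1 : dist (deriv u t) (deriv u x) ≤ C * dist t x := hl.dist_le_mul t x
    have h2 : dist t x ≤ h := by
      rw [Real.dist_eq, abs_sub_le_iff]
      constructor <;> [linarith [ht.2]; linarith [ht.1]]
    calc ‖deriv u t - c‖ = dist (deriv u t) (deriv u x) := by rw [dist_eq_norm, hc]
      _ ≤ C * dist t x := h1
      _ ≤ C * h := mul_le_mul_of_nonneg_left h2 C.coe_nonneg
  have key := (convex_Icc x (x + h)).norm_image_sub_le_of_norm_hasDerivWithin_le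
    hw hbound (Set.left_mem_Icc.2 (by linarith)) (Set.right_mem_Icc.2 (by linarith))
  have : ‖(u (x + h) - (x + h) * c) - (u x - x * c)‖ ≤ C * h * ‖x + h - x‖ := key
  rw [Real.norm_eq_abs] at this
  calc |u (x + h) - u x - h * c| = |(u (x + h) - (x + h) * c) - (u x - x * c)| := by ring_nf
    _ ≤ C * h * ‖x + h - x‖ := this
    _ = C * h * h := by rw [Real.norm_eq_abs, show x + h - x = h by ring, abs_of_nonneg hh]

/-- Pointwise limit of `C`-Lipschitz functions is `C`-Lipschitz. -/
lemma lipschitz_of_pointwise_limit {u : ℕ → ℝ → ℝ} {g : ℝ → ℝ} {C : NNReal}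
    (hl : ∀ n, LipschitzWith C (u n))
    (hconv : ∀ x, Tendsto (fun n => u n x) atTop (𝓝 (g x))) :
    LipschitzWith C g := by
  apply LipschitzWith.of_dist_le_mul
  intro x y
  have h1 : Tendsto (fun n => dist (u n x) (u n y)) atTop (𝓝 (dist (g x) (g y))) :=
    (hconv x).dist (hconv y)
  exact le_of_tendsto h1 (Eventually.of_forall fun n => (hl n).dist_le_mul x y)

/-- Pointwise convergence of an equi-Lipschitz family is locally uniform. -/
lemma tlu_of_pointwise_limit {u : ℕ → ℝ → ℝ} {g : ℝ → ℝ} {C : NNReal}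
    (hl : ∀ n, LipschitzWith C (u n))
    (hconv : ∀ x, Tendsto (fun n => u n x) atTop (𝓝 (g x))) :
    TendstoLocallyUniformly u g atTop := by
  have hg : LipschitzWith C g := lipschitz_of_pointwise_limit hl hconv
  rw [Metric.tendstoLocallyUniformly_iff]
  intro ε hε x
  set δ : ℝ := ε / (4 * (C + 1)) with hδ
  have hC1 : (0:ℝ) < C + 1 := by positivity
  have hδpos : 0 < δ := by positivity
  refine ⟨Metric.ball x δ, Metric.ball_mem_nhds x hδpos, ?_⟩
  have hev : ∀ᶠ n in atTop, dist (g x) (u n x) < ε / 4 := by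
    have := (hconv x).dist (tendsto_const_nhds (x := g x))
    have h0 : Tendsto (fun n => dist (u n x) (g x)) atTop (𝓝 0) := by
      simpa using (hconv x).dist (tendsto_const_nhds (x := g x))
    have := (Metric.tendsto_nhds.1 h0) (ε / 4) (by positivity)
    filter_upwards [this] with n hn
    rw [dist_comm]
    simpa [Real.dist_eq, abs_of_nonneg dist_nonneg] using hn
  filter_upwards [hev] with n hn y hy
  have hCd : (C:ℝ) * δ ≤ ε / 4 := by
    have h1 : (C:ℝ) * δ ≤ ((C:ℝ) + 1) * δ := by nlinarith [hδpos.le]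
    have h2 : ((C:ℝ) + 1) * δ = ε / 4 := by rw [hδ]; field_simp
    linarith
  have hyd : dist y x < δ := hy
  have h1 : dist (g y) (g x) ≤ C * δ :=
    le_trans (hg.dist_le_mul y x) (by nlinarith [C.coe_nonneg])
  have h2 : dist (u n x) (u n y) ≤ C * δ :=
    le_trans ((hl n).dist_le_mul x y) (by rw [dist_comm] at hyd; nlinarith [C.coe_nonneg])
  calc dist (g y) (u n y) ≤ dist (g y) (g x) + dist (g x) (u n x) + dist (u n x) (u n y) :=
        dist_triangle4 _ _ _ _
    _ < ε / 4 + ε / 4 + ε / 4 := by linarith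
    _ < ε := by linarith

/-- If `u n` are differentiable with equi-Lipschitz derivatives and converge pointwise,
then the derivatives converge pointwise. -/
lemma deriv_tendsto_of_pointwise {u : ℕ → ℝ → ℝ} {C : NNReal} (hC : 0 < (C:ℝ))
    (hu : ∀ n, Differentiable ℝ (u n))
    (hl : ∀ n, LipschitzWith C (deriv (u n)))
    (hconv : ∀ x, ∃ L, Tendsto (fun n => u n x) atTop (𝓝 L)) (x : ℝ) :
    ∃ L, Tendsto (fun n => deriv (u n) x) atTop (𝓝 L) := by
  have hcauchy : CauchySeq (fun n => deriv (u n) x) := by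
    rw [Metric.cauchySeq_iff]
    intro ε hε
    set h : ℝ := ε / (4 * C) with hh
    have hhpos : 0 < h := by positivity
    -- difference quotients
    set q : ℕ → ℝ := fun n => (u n (x + h) - u n x) / h with hq
    have hqconv : ∃ L, Tendsto q atTop (𝓝 L) := by
      obtain ⟨L1, hL1⟩ := hconv (x + h)
      obtain ⟨L2, hL2⟩ := hconv x
      exact ⟨(L1 - L2) / h, ((hL1.sub hL2).div_const h)⟩
    obtain ⟨L, hL⟩ := hqconv
    have hqc : CauchySeq q := hL.cauchySeq
    rw [Metric.cauchySeq_iff] at hqc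
    obtain ⟨N, hN⟩ := hqc (ε / 4) (by positivity)
    refine ⟨N, fun m hm n hn => ?_⟩
    have key : ∀ i, |deriv (u i) x - q i| ≤ ε / 4 := by
      intro i
      have := taylor_bound_aux (u i) (hu i) (hl i) x h hhpos.le
      have heq : deriv (u i) x - q i = -((u i (x + h) - u i x - h * deriv (u i) x) / h) := by
        rw [hq]
        field_simp
        ring
      rw [heq, abs_neg, abs_div, abs_of_nonneg hhpos.le]
      rw [div_le_iff₀ hhpos]
      calc |u i (x + h) - u i x - h * deriv (u i) x| ≤ C * h * h := this
        _ = ε / 4 * h := by rw [hh]; field_simp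
    have hmn : dist (q m) (q n) < ε / 4 := hN m hm n hn
    rw [Real.dist_eq] at hmn ⊢
    calc |deriv (u m) x - deriv (u n) x|
        ≤ |deriv (u m) x - q m| + |q m - q n| + |q n - deriv (u n) x| := by
          have := abs_sub_le (deriv (u m) x) (q m) (deriv (u n) x)
          have := abs_sub_le (q m) (q n) (deriv (u n) x)
          calc |deriv (u m) x - deriv (u n) x|
              ≤ |deriv (u m) x - q m| + |q m - deriv (u n) x| := abs_sub_le _ _ _
            _ ≤ |deriv (u m) x - q m| + (|q m - q n| + |q n - deriv (u n) x|) := by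
                linarith [abs_sub_le (q m) (q n) (deriv (u n) x)]
            _ = _ := by ring
      _ < ε / 4 + ε / 4 + ε / 4 := by
          have h3 : |q n - deriv (u n) x| = |deriv (u n) x - q n| := abs_sub_comm _ _
          linarith [key m, key n]
      _ < ε := by linarith
  exact cauchySeq_tendsto_of_complete hcauchy

lemma ck_ball_aux (B : ℝ) (hB : 0 < B) : ∀ (k : ℕ) (f : ℕ → ℝ → ℝ) (flim : ℝ → ℝ),
    (∀ n, ContDiff ℝ k (f n) ∧
      (∀ x, ∀ j ≤ k, |iteratedDeriv j (f n) x| ≤ B) ∧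
      LipschitzWith B.toNNReal (iteratedDeriv k (f n))) →
    (∀ x, Tendsto (fun n => f n x) atTop (𝓝 (flim x))) →
    ContDiff ℝ k flim ∧
    (∀ x, ∀ j ≤ k, |iteratedDeriv j flim x| ≤ B) ∧
    LipschitzWith B.toNNReal (iteratedDeriv k flim) := by
  have hBc : ((B.toNNReal : NNReal) : ℝ) = B := Real.coe_toNNReal _ hB.le
  intro k
  induction k with
  | zero =>
    intro f flim hmem hconv
    have hlip : ∀ n, LipschitzWith B.toNNReal (f n) := by
      intro n
      have := (hmem n).2.2
      rwa [iteratedDeriv_zero] at this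
    have hglip : LipschitzWith B.toNNReal flim := lipschitz_of_pointwise_limit hlip hconv
    refine ⟨?_, ?_, ?_⟩
    · exact contDiff_zero.2 hglip.continuous
    · intro x j hj
      interval_cases j
      rw [iteratedDeriv_zero]
      have h1 : Tendsto (fun n => |f n x|) atTop (𝓝 |flim x|) := (hconv x).abs
      refine le_of_tendsto h1 (Eventually.of_forall fun n => ?_)
      have := (hmem n).2.1 x 0 le_rfl
      rwa [iteratedDeriv_zero] at this
    · rwa [iteratedDeriv_zero]
  | succ k ih =>
    intro f flim hmem hconv
    have hC0 : (0:ℝ) < B.toNNReal := by rw [hBc]; exact hB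
    have hdiff : ∀ n, Differentiable ℝ (f n) := by
      intro n
      exact (hmem n).1.differentiable (by simp)
    have hlip1 : ∀ n, LipschitzWith B.toNNReal (deriv (f n)) := by
      intro n
      cases k with
      | zero =>
        have := (hmem n).2.2
        rwa [iteratedDeriv_one] at this
      | succ k' =>
        apply lipschitzWith_of_nnnorm_deriv_le
        · have h1 : ContDiff ℝ (k' + 1 + 1 : ℕ) (f n) := (hmem n).1
          have : (((k' + 1 + 1 : ℕ) : WithTop ℕ∞)) = ((k' + 1 : ℕ) : WithTop ℕ∞) + 1 := by
            push_cast; ring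
          rw [this] at h1
          rcases contDiff_succ_iff_deriv.1 h1 with ⟨hd, _, hcd⟩
          exact hcd.differentiable (by simp)
        · intro x
          have hb := (hmem n).2.1 x 2 (by omega)
          rw [show (2 : ℕ) = 1 + 1 from rfl, iteratedDeriv_succ, iteratedDeriv_one] at hb
          rw [← NNReal.coe_le_coe, coe_nnnorm, Real.norm_eq_abs, hBc]
          exact hb
    have hgex : ∀ x, ∃ L, Tendsto (fun n => deriv (f n) x) atTop (𝓝 L) :=
      deriv_tendsto_of_pointwise hC0 hdiff hlip1 (fun x => ⟨flim x, hconv x⟩)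
    choose g hg using hgex
    have hcast : (((k + 1 : ℕ)) : WithTop ℕ∞) = ((k : ℕ) : WithTop ℕ∞) + 1 := by
      push_cast; ring
    have hmem' : ∀ n, ContDiff ℝ k (deriv (f n)) ∧
        (∀ x, ∀ j ≤ k, |iteratedDeriv j (deriv (f n)) x| ≤ B) ∧
        LipschitzWith B.toNNReal (iteratedDeriv k (deriv (f n))) := by
      intro n
      refine ⟨?_, ?_, ?_⟩
      · have h1 : ContDiff ℝ (k + 1 : ℕ) (f n) := (hmem n).1
        rw [hcast] at h1
        exact (contDiff_succ_iff_deriv.1 h1).2.2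
      · intro x j hj
        rw [← iteratedDeriv_succ']
        exact (hmem n).2.1 x (j + 1) (by omega)
      · rw [← iteratedDeriv_succ']
        exact (hmem n).2.2
    obtain ⟨hg1, hg2, hg3⟩ := ih (fun n => deriv (f n)) g hmem' hg
    -- flim has derivative g everywhere
    have htlu : TendstoLocallyUniformly (fun n => deriv (f n)) g atTop :=
      tlu_of_pointwise_limit hlip1 hg
    have hfd : ∀ x, HasDerivAt flim (g x) x := by
      intro x
      apply hasDerivAt_of_tendstoLocallyUniformlyOn isOpen_univ
        (tendstoLocallyUniformlyOn_univ.2 htlu)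
        (Eventually.of_forall fun n y _ => ((hdiff n) y).hasDerivAt)
        (fun y _ => hconv y) (Set.mem_univ x)
    have hder : deriv flim = g := funext fun x => (hfd x).deriv
    refine ⟨?_, ?_, ?_⟩
    · rw [hcast, contDiff_succ_iff_deriv]
      refine ⟨fun x => (hfd x).differentiableAt, ?_, hder ▸ hg1⟩
      intro hω
      exact absurd hω (by exact_mod_cast (by simp : ((k : ℕ) : WithTop ℕ∞) ≠ ⊤))
    · intro x j hj
      cases j with
      | zero =>
        rw [iteratedDeriv_zero]
        have h1 : Tendsto (fun n => |f n x|) atTop (𝓝 |flim x|) := (hconv x).abs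
        refine le_of_tendsto h1 (Eventually.of_forall fun n => ?_)
        have := (hmem n).2.1 x 0 (by omega)
        rwa [iteratedDeriv_zero] at this
      | succ j' =>
        rw [iteratedDeriv_succ', hder]
        exact hg2 x j' (by omega)
    · rw [iteratedDeriv_succ', hder]
      exact hg3

/-- The set of `C^k` functions `ℝ → ℝ` with all derivatives up to order `k` bounded by `B`
and `k`-th derivative `B`-Lipschitz is closed under pointwise convergence. -/
theorem ck_ball_closed_under_pointwise_convergence (k : ℕ) (B : ℝ) (hB : 0 < B)
    (f : ℕ → ℝ → ℝ) (flim : ℝ → ℝ)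
    (hmem : ∀ n, ContDiff ℝ k (f n) ∧
      (∀ x, ∀ j ≤ k, |iteratedDeriv j (f n) x| ≤ B) ∧
      LipschitzWith B.toNNReal (iteratedDeriv k (f n)))
    (hconv : ∀ x, Tendsto (fun n => f n x) atTop (𝓝 (flim x))) :
    ContDiff ℝ k flim ∧
    (∀ x, ∀ j ≤ k, |iteratedDeriv j flim x| ≤ B) ∧
    LipschitzWith B.toNNReal (iteratedDeriv k flim) := by
  exact ck_ball_aux B hB k f flim hmem hconv
end

section
/- Let ω > 0, λ, λ₀ with λ·N − λ₀ < 0 for an integer N ≥ 1, and let G : ℝ × ℝ → ℝ be continuous with |G(θ, s)| ≤ C·|s|^N for all (θ, s). Define H(θ,s) = ∫₀^∞ e^{−λ₀ t}·G(θ + ω t, s·e^{λ t}) dt. Then H is well-defined and satisfies |H(θ,s)| ≤ C·|s|^N / (λ₀ − λ·N) for all (θ, s). -/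
open MeasureTheory

lemma integral_exp_neg_mul_Ioi_zero {b : ℝ} (hb : 0 < b) :
    (∫ x in Set.Ioi (0:ℝ), Real.exp (-b * x)) = 1 / b := by
  have := MeasureTheory.integral_comp_mul_right_Ioi (fun x => Real.exp (-x)) 0 hb
  simp only [zero_mul, neg_mul, smul_eq_mul] at this ⊢
  rw [show (fun x => Real.exp (-(b * x))) = (fun x => Real.exp (-(x * b))) by
        ext x; ring_nf, this, integral_exp_neg_Ioi, neg_zero, Real.exp_zero]
  field_simp

/-- Key weighted bound for the operator `Γ^>` along characteristics:
if `|G(θ,s)| ≤ C·|s|^N` then `H(θ,s) = ∫₀^∞ e^{−λ₀t} G(θ+ωt, s·e^{λt}) dt` is well-defined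
and `|H(θ,s)| ≤ C·|s|^N/(λ₀ − λN)`. -/
theorem weighted_bound_along_characteristics (ω lam lam₀ C : ℝ) (hω : 0 < ω)
    (N : ℕ) (hN : 1 ≤ N) (hsign : lam * N - lam₀ < 0)
    (G : ℝ × ℝ → ℝ) (hG : Continuous G)
    (hbd : ∀ θ s : ℝ, |G (θ, s)| ≤ C * |s| ^ N) :
    (∀ θ s : ℝ, IntegrableOn
      (fun t => Real.exp (-lam₀ * t) * G (θ + ω * t, s * Real.exp (lam * t)))
      (Set.Ioi 0)) ∧
    ∀ θ s : ℝ,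
      |∫ t in Set.Ioi (0:ℝ), Real.exp (-lam₀ * t) * G (θ + ω * t, s * Real.exp (lam * t))|
        ≤ C * |s| ^ N / (lam₀ - lam * N) := by
  have hb : 0 < lam₀ - lam * N := by linarith
  have hC : 0 ≤ C := by
    have := hbd 0 1
    simpa using (abs_nonneg _).trans this
  -- pointwise bound
  have key : ∀ θ s t : ℝ,
      |Real.exp (-lam₀ * t) * G (θ + ω * t, s * Real.exp (lam * t))|
        ≤ C * |s| ^ N * Real.exp (-(lam₀ - lam * N) * t) := by
    intro θ s t
    rw [abs_mul, abs_of_pos (Real.exp_pos _)]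
    calc Real.exp (-lam₀ * t) * |G (θ + ω * t, s * Real.exp (lam * t))|
        ≤ Real.exp (-lam₀ * t) * (C * |s * Real.exp (lam * t)| ^ N) := by
          exact mul_le_mul_of_nonneg_left (hbd _ _) (Real.exp_pos _).le
      _ = C * |s| ^ N * Real.exp (-(lam₀ - lam * N) * t) := by
          rw [abs_mul, abs_of_pos (Real.exp_pos _), mul_pow, ← Real.exp_nat_mul,
            show (-(lam₀ - lam * (N:ℝ))) * t = -lam₀ * t + (N : ℝ) * (lam * t) by ring,
            Real.exp_add]
          ring
  have hgint : ∀ s : ℝ, Integrable (fun t : ℝ =>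
      C * |s| ^ N * Real.exp (-(lam₀ - lam * N) * t)) (volume.restrict (Set.Ioi 0)) :=
    fun s => (exp_neg_integrableOn_Ioi 0 hb).const_mul _
  have hint : ∀ θ s : ℝ, IntegrableOn
      (fun t => Real.exp (-lam₀ * t) * G (θ + ω * t, s * Real.exp (lam * t)))
      (Set.Ioi 0) := by
    intro θ s
    have hc : Continuous fun t : ℝ =>
        Real.exp (-lam₀ * t) * G (θ + ω * t, s * Real.exp (lam * t)) := by
      fun_prop
    refine (hgint s).mono' hc.aestronglyMeasurable ?_
    filter_upwards with t
    simpa only [Real.norm_eq_abs] using key θ s t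
  refine ⟨hint, fun θ s => ?_⟩
  have hle := norm_integral_le_of_norm_le
    (f := fun t => Real.exp (-lam₀ * t) * G (θ + ω * t, s * Real.exp (lam * t))) (hgint s)
    (Filter.Eventually.of_forall fun t => by simpa only [Real.norm_eq_abs] using key θ s t)
  rw [Real.norm_eq_abs] at hle
  refine hle.trans_eq ?_
  rw [integral_const_mul, integral_exp_neg_mul_Ioi_zero hb]
  ring
end

section
/- Let r, K, W⁰ be such that r∘K is bounded on the range of W⁰ and let Y₁ be C¹ with bounded derivative (with ‖DY₁‖ := max of the operator norms of the partial derivatives). Let Z, Z′ : ℝ → ℝ² be Lipschitz with constant B, and a, a′ ∈ ℝ. Then for every θ: |Y₁(Z(θ), Z(θ − a·ρ(Z(θ)))) − Y₁(Z′(θ), Z′(θ − a′·ρ(Z′(θ))))| ≤ ‖DY₁‖·(2 + B·|a′|·‖Dρ‖)·‖Z − Z′‖_∞ + ‖DY₁‖·B·‖ρ‖_∞·|a − a′|, where ρ : ℝ² → ℝ is C¹ with bounded derivative and ‖·‖_∞ denotes sup norms. -/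
/-- The key Lipschitz estimate (es0) for the delayed composition operator in the
zeroth-order invariance equation. -/
theorem delayed_composition_lipschitz_estimate
    (Y₁ : ℝ × ℝ → ℝ × ℝ → ℝ) (LY : ℝ) (hLY : 0 ≤ LY)
    (hY₁smooth : ContDiff ℝ 1 (fun p : (ℝ × ℝ) × (ℝ × ℝ) => Y₁ p.1 p.2))
    (hY₁lip1 : ∀ x x' y : ℝ × ℝ, |Y₁ x y - Y₁ x' y| ≤ LY * ‖x - x'‖)
    (hY₁lip2 : ∀ x y y' : ℝ × ℝ, |Y₁ x y - Y₁ x y'| ≤ LY * ‖y - y'‖)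
    (ρ : ℝ × ℝ → ℝ) (hρsmooth : ContDiff ℝ 1 ρ)
    (Rρ Lρ : ℝ) (hρbd : ∀ x, |ρ x| ≤ Rρ)
    (hρlip : ∀ x y : ℝ × ℝ, |ρ x - ρ y| ≤ Lρ * ‖x - y‖)
    (B : ℝ) (hB : 0 ≤ B) (Z Z' : ℝ → ℝ × ℝ)
    (hZlip : LipschitzWith B.toNNReal Z) (hZ'lip : LipschitzWith B.toNNReal Z')
    (dZZ : ℝ) (hdZZ : ∀ θ, ‖Z θ - Z' θ‖ ≤ dZZ)
    (a a' : ℝ) :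
    ∀ θ : ℝ,
      |Y₁ (Z θ) (Z (θ - a * ρ (Z θ))) - Y₁ (Z' θ) (Z' (θ - a' * ρ (Z' θ)))|
        ≤ LY * (2 + B * |a'| * Lρ) * dZZ + LY * B * Rρ * |a - a'| := by
  intro θ
  set t₁ := θ - a * ρ (Z θ) with ht₁
  set t₂ := θ - a' * ρ (Z' θ) with ht₂
  have h1 : |Y₁ (Z θ) (Z t₁) - Y₁ (Z' θ) (Z t₁)| ≤ LY * dZZ := by
    calc |Y₁ (Z θ) (Z t₁) - Y₁ (Z' θ) (Z t₁)| ≤ LY * ‖Z θ - Z' θ‖ :=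
          hY₁lip1 _ _ _
      _ ≤ LY * dZZ := by
          exact mul_le_mul_of_nonneg_left (hdZZ θ) hLY
  -- estimate the time difference
  have hLρnn : 0 ≤ Lρ := by
    have h := hρlip (1, 0) (0, 0)
    have hn : ‖((1:ℝ), (0:ℝ)) - ((0:ℝ), (0:ℝ))‖ = 1 := by simp [Prod.norm_def]
    rw [hn, mul_one] at h
    exact le_trans (abs_nonneg _) h
  have hdnn : 0 ≤ dZZ := le_trans (norm_nonneg _) (hdZZ θ)
  have hρd : |ρ (Z θ) - ρ (Z' θ)| ≤ Lρ * dZZ :=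
    calc |ρ (Z θ) - ρ (Z' θ)| ≤ Lρ * ‖Z θ - Z' θ‖ := hρlip _ _
      _ ≤ Lρ * dZZ := mul_le_mul_of_nonneg_left (hdZZ θ) hLρnn
  have hRρ : 0 ≤ Rρ := le_trans (abs_nonneg _) (hρbd (Z θ))
  have htd : |t₁ - t₂| ≤ Rρ * |a - a'| + |a'| * (Lρ * dZZ) := by
    have : t₁ - t₂ = -((a - a') * ρ (Z θ) + a' * (ρ (Z θ) - ρ (Z' θ))) := by
      rw [ht₁, ht₂]; ring
    rw [this, abs_neg]
    calc |(a - a') * ρ (Z θ) + a' * (ρ (Z θ) - ρ (Z' θ))|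
        ≤ |(a - a') * ρ (Z θ)| + |a' * (ρ (Z θ) - ρ (Z' θ))| := abs_add_le _ _
      _ = |a - a'| * |ρ (Z θ)| + |a'| * |ρ (Z θ) - ρ (Z' θ)| := by
          rw [abs_mul, abs_mul]
      _ ≤ |a - a'| * Rρ + |a'| * (Lρ * dZZ) := by
          gcongr
          · exact hρbd _
      _ = Rρ * |a - a'| + |a'| * (Lρ * dZZ) := by ring
  have h2 : |Y₁ (Z' θ) (Z t₁) - Y₁ (Z' θ) (Z' t₂)|
      ≤ LY * (dZZ + B * (Rρ * |a - a'| + |a'| * (Lρ * dZZ))) := by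
    have hstep : ‖Z t₁ - Z' t₂‖ ≤ dZZ + B * (Rρ * |a - a'| + |a'| * (Lρ * dZZ)) := by
      have hZ'1 : ‖Z' t₁ - Z' t₂‖ ≤ B * |t₁ - t₂| := by
        have := hZ'lip.dist_le_mul t₁ t₂
        rw [Real.coe_toNNReal B hB] at this
        simpa [dist_eq_norm, Real.dist_eq] using this
      calc ‖Z t₁ - Z' t₂‖ = ‖(Z t₁ - Z' t₁) + (Z' t₁ - Z' t₂)‖ := by rw [sub_add_sub_cancel]
        _ ≤ ‖Z t₁ - Z' t₁‖ + ‖Z' t₁ - Z' t₂‖ := norm_add_le _ _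
        _ ≤ dZZ + B * |t₁ - t₂| := add_le_add (hdZZ t₁) hZ'1
        _ ≤ dZZ + B * (Rρ * |a - a'| + |a'| * (Lρ * dZZ)) := by
            gcongr
    calc |Y₁ (Z' θ) (Z t₁) - Y₁ (Z' θ) (Z' t₂)| ≤ LY * ‖Z t₁ - Z' t₂‖ :=
        hY₁lip2 _ _ _
      _ ≤ LY * (dZZ + B * (Rρ * |a - a'| + |a'| * (Lρ * dZZ))) :=
        mul_le_mul_of_nonneg_left hstep hLY
  calc |Y₁ (Z θ) (Z t₁) - Y₁ (Z' θ) (Z' t₂)|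
      ≤ |Y₁ (Z θ) (Z t₁) - Y₁ (Z' θ) (Z t₁)|
        + |Y₁ (Z' θ) (Z t₁) - Y₁ (Z' θ) (Z' t₂)| := abs_sub_le _ _ _
    _ ≤ LY * dZZ + LY * (dZZ + B * (Rρ * |a - a'| + |a'| * (Lρ * dZZ))) :=
        add_le_add h1 h2
    _ = LY * (2 + B * |a'| * Lρ) * dZZ + LY * B * Rρ * |a - a'| := by ring
end
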